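/- If A is an invertible almost even Hermitian matrix over ℤπ, then A⁻¹ is also almost even (and Hermitian). -/

import Mathlib

/-- The integral group ring ℤπ. -/
abbrev GroupRing (π : Type) [Group π] := MonoidAlgebra ℤ π

/-- The involution on ℤπ induced by g ↦ g⁻¹, extended ℤ-linearly. -/
noncomputable def GRconj {π : Type} [Group π] (x : GroupRing π) : GroupRing π :=
  MonoidAlgebra.ofCoeff (Finsupp.mapDomain (fun g : π => g⁻¹) x.coeff)

/-- Entrywise involution followed by transpose: the conjugate-transpose of a matrix over ℤπ. -/
noncomputable def ctrans {π : Type} [Group π] {m n : Type} (A : Matrix m n (GroupRing π)) :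
    Matrix n m (GroupRing π) :=
  (A.map GRconj).transpose

/-- A square matrix over ℤπ is Hermitian if conj(A)ᵗ = A. -/
def IsHermitianGR {π : Type} [Group π] {n : Type} (A : Matrix n n (GroupRing π)) : Prop :=
  ctrans A = A


/-- A matrix over ℤπ is almost even if for every g ∈ π with g² = 1 and g ≠ 1, the coefficient
of g in every diagonal entry is even. -/
def AlmostEven {π : Type} [Group π] {n : ℕ} (A : Matrix (Fin n) (Fin n) (GroupRing π)) : Prop :=
  ∀ (i : Fin n) (g : π), g ^ 2 = 1 → g ≠ 1 → Even ((A i i).coeff g)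

/-!
Since A is Hermitian, so is B = A⁻¹, and B = B A B gives
`B i i = ∑ j, ∑ k, B i j * A j k * conj (B i k)`. The terms indexed by `(j, k)` and `(k, j)` are
conjugate to each other, and conjugation fixes the coefficient of an involution `g`, so together
they contribute an even amount to the coefficient of `g`. The diagonal terms `v * a * conj v`, with
`a` Hermitian and almost even, yield to the same pairing after expanding `v = ∑ c_s s`: the
diagonal terms of that expansion are `c_s² · s a s⁻¹`, whose coefficient at `g` is `c_s²` times
the coefficient of `a` at the involution `s⁻¹ g s`.
-/

theorem Finset.even_sum_of_involution {ι : Type*} {s : Finset ι} {f : ι → ℤ} (σ : ι → ι)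
    (hσs : ∀ i ∈ s, σ i ∈ s) (hσσ : ∀ i ∈ s, σ (σ i) = i) (hfσ : ∀ i ∈ s, f (σ i) = f i)
    (hfix : ∀ i ∈ s, σ i = i → Even (f i)) : Even (∑ i ∈ s, f i) := by
  rw [← ZMod.intCast_eq_zero_iff_even, Int.cast_sum]
  refine Finset.sum_involution (fun i _ ↦ σ i) (fun i hi ↦ ?_) (fun i hi hne hfixed ↦ ?_) hσs hσσ
  · rw [hfσ i hi, CharTwo.add_self_eq_zero]
  · exact hne ((ZMod.intCast_eq_zero_iff_even).2 (hfix i hi hfixed))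

section GroupRing

variable {π : Type} [Group π]

def IsAlmostEven (x : GroupRing π) : Prop :=
  ∀ g : π, g ^ 2 = 1 → g ≠ 1 → Even (x.coeff g)

theorem coeff_GRconj (x : GroupRing π) (g : π) : (GRconj x).coeff g = x.coeff g⁻¹ := by
  simpa [GRconj] using Finsupp.mapDomain_apply inv_injective x.coeff g⁻¹

theorem GRconj_single (g : π) (c : ℤ) :
    GRconj (MonoidAlgebra.single g c) = MonoidAlgebra.single g⁻¹ c := by
  simp [GRconj, MonoidAlgebra.coeff_single, Finsupp.mapDomain_single]

theorem GRconj_GRconj (x : GroupRing π) : GRconj (GRconj x) = x := by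
  ext g
  rw [coeff_GRconj, coeff_GRconj, inv_inv]

theorem GRconj_zero : GRconj (0 : GroupRing π) = 0 := by
  simp [GRconj]

theorem GRconj_add (x y : GroupRing π) : GRconj (x + y) = GRconj x + GRconj y := by
  simp [GRconj, Finsupp.mapDomain_add]

theorem GRconj_sum {ι : Type*} (s : Finset ι) (f : ι → GroupRing π) :
    GRconj (∑ i ∈ s, f i) = ∑ i ∈ s, GRconj (f i) :=
  map_sum (AddMonoidHom.mk' GRconj GRconj_add) f s

theorem GRconj_one : GRconj (1 : GroupRing π) = 1 := by
  rw [MonoidAlgebra.one_def, GRconj_single, inv_one]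

theorem GRconj_mul (x y : GroupRing π) : GRconj (x * y) = GRconj y * GRconj x := by
  induction x using MonoidAlgebra.induction_linear with
  | zero => simp [GRconj_zero]
  | add x₁ x₂ h₁ h₂ => rw [add_mul, GRconj_add, GRconj_add, h₁, h₂, mul_add]
  | single g c =>
    induction y using MonoidAlgebra.induction_linear with
    | zero => simp [GRconj_zero]
    | add y₁ y₂ h₁ h₂ => rw [mul_add, GRconj_add, GRconj_add, h₁, h₂, add_mul]
    | single h d =>
      simp only [MonoidAlgebra.single_mul_single, GRconj_single, mul_inv_rev, mul_comm c d]

theorem GRconj_mul_mul_GRconj (x a y : GroupRing π) :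
    GRconj (x * a * GRconj y) = y * GRconj a * GRconj x := by
  rw [GRconj_mul, GRconj_mul, GRconj_GRconj, mul_assoc]

theorem even_coeff_sum_sum_of_conj_symm {ι : Type*} {g : π} (hg : g ^ 2 = 1) (s : Finset ι)
    (F : ι → ι → GroupRing π) (hF : ∀ j k, F k j = GRconj (F j k))
    (hdiag : ∀ k ∈ s, Even ((F k k).coeff g)) :
    Even ((∑ j ∈ s, ∑ k ∈ s, F j k).coeff g) := by
  have hg_inv : g⁻¹ = g := inv_eq_of_mul_eq_one_left (by rwa [← pow_two])
  rw [← Finset.sum_product', MonoidAlgebra.coeff_sum, Finsupp.finsetSum_apply]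
  refine Finset.even_sum_of_involution Prod.swap (by simp +contextual) (by simp)
    (fun p _ ↦ by rw [Prod.fst_swap, Prod.snd_swap, hF, coeff_GRconj, hg_inv]) ?_
  rintro ⟨j, k⟩ hjk hswap
  obtain rfl : k = j := congrArg Prod.fst hswap
  exact hdiag k (Finset.mem_product.1 hjk).1

theorem coeff_single_mul_mul_GRconj_single (s g : π) (c : ℤ) (a : GroupRing π) :
    (MonoidAlgebra.single s c * a * GRconj (MonoidAlgebra.single s c)).coeff g
      = c * a.coeff (s⁻¹ * g * s) * c := by
  rw [GRconj_single, MonoidAlgebra.coeff_mul_single_apply, MonoidAlgebra.coeff_single_mul_apply,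
    inv_inv, mul_assoc s⁻¹]

theorem IsAlmostEven.mul_mul_GRconj {a : GroupRing π} (haE : IsAlmostEven a)
    (ha : GRconj a = a) (v : GroupRing π) : IsAlmostEven (v * a * GRconj v) := by
  intro g hg hg1
  set e : π → GroupRing π := fun s ↦ MonoidAlgebra.single s (v.coeff s)
  have hv : v = ∑ s ∈ v.coeff.support, e s := (MonoidAlgebra.sum_coeff_single v).symm
  have hexpand : v * a * GRconj v = ∑ s ∈ v.coeff.support, ∑ t ∈ v.coeff.support,
      e s * a * GRconj (e t) := by
    conv_lhs => rw [hv]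
    rw [Finset.sum_mul, GRconj_sum, Finset.sum_mul_sum]
  rw [hexpand]
  refine even_coeff_sum_sum_of_conj_symm hg _ _ (fun s t ↦ by rw [GRconj_mul_mul_GRconj, ha])
    fun s _ ↦ ?_
  have hconj_sq : (s⁻¹ * g * s) ^ 2 = 1 := by
    rw [show (s⁻¹ * g * s) ^ 2 = s⁻¹ * g ^ 2 * s by simp only [pow_two]; group, hg]
    group
  have hconj_ne : s⁻¹ * g * s ≠ 1 := by
    simpa [mul_assoc, inv_mul_eq_one] using hg1
  rw [coeff_single_mul_mul_GRconj_single]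
  exact ((haE _ hconj_sq hconj_ne).mul_left _).mul_right _

variable {n : Type}

theorem ctrans_apply {m : Type} (A : Matrix m n (GroupRing π)) (i : n) (j : m) :
    ctrans A i j = GRconj (A j i) :=
  rfl

theorem ctrans_mul [Fintype n] (M N : Matrix n n (GroupRing π)) :
    ctrans (M * N) = ctrans N * ctrans M := by
  refine Matrix.ext fun i j ↦ ?_
  simp only [ctrans_apply, Matrix.mul_apply, GRconj_sum, GRconj_mul]

theorem ctrans_one [DecidableEq n] : ctrans (1 : Matrix n n (GroupRing π)) = 1 := by
  refine Matrix.ext fun i j ↦ ?_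
  rcases eq_or_ne i j with rfl | hij
  · rw [ctrans_apply, Matrix.one_apply_eq, GRconj_one]
  · rw [ctrans_apply, Matrix.one_apply_ne hij.symm, Matrix.one_apply_ne hij, GRconj_zero]

theorem IsHermitianGR.of_mul_eq_one [Fintype n] [DecidableEq n] {A B : Matrix n n (GroupRing π)}
    (hA : IsHermitianGR A) (hAB : A * B = 1) : IsHermitianGR B := by
  have hleft : ctrans B * A = 1 := by
    rw [← hA, ← ctrans_mul, hAB, ctrans_one]
  calc ctrans B = ctrans B * (A * B) := by rw [hAB, mul_one]
    _ = B := by rw [← mul_assoc, hleft, one_mul]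

theorem IsHermitianGR.apply_eq_GRconj {A : Matrix n n (GroupRing π)} (hA : IsHermitianGR A)
    (i j : n) : A i j = GRconj (A j i) :=
  (congrFun (congrFun hA i) j).symm

end GroupRing

theorem almostEven_inv_general (π : Type) [Group π] (n : ℕ)
    (A B : Matrix (Fin n) (Fin n) (GroupRing π))
    (hA : IsHermitianGR A) (hAE : AlmostEven A)
    (hAB : A * B = 1) :
    AlmostEven B ∧ IsHermitianGR B := by
  have hB : IsHermitianGR B := hA.of_mul_eq_one hAB
  refine ⟨fun i g hg hg1 ↦ ?_, hB⟩
  have hBii : B i i = ∑ j, ∑ k, B i j * A j k * GRconj (B i k) := by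
    calc B i i = (B * A * B) i i := by rw [mul_assoc, hAB, mul_one]
      _ = ∑ k, ∑ j, B i j * A j k * GRconj (B i k) := by
        simp only [Matrix.mul_apply, Finset.sum_mul, ← hB.apply_eq_GRconj]
      _ = ∑ j, ∑ k, B i j * A j k * GRconj (B i k) := Finset.sum_comm
  rw [hBii]
  refine even_coeff_sum_sum_of_conj_symm hg _ _
    (fun j k ↦ by rw [GRconj_mul_mul_GRconj, ← hA.apply_eq_GRconj]) (fun k _ ↦ ?_)
  exact IsAlmostEven.mul_mul_GRconj (hAE k) (hA.apply_eq_GRconj k k).symm (B i k) g hg hg1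

/-- The inverse of an invertible almost even Hermitian matrix is almost even and Hermitian. -/
theorem almostEven_inv (π : Type) [Group π] (n : ℕ)
    (A B : Matrix (Fin n) (Fin n) (GroupRing π))
    (hA : IsHermitianGR A) (hAE : AlmostEven A)
    (hAB : A * B = 1) (hBA : B * A = 1) :
    AlmostEven B ∧ IsHermitianGR B :=
  almostEven_inv_general π n A B hA hAE hAB
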